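/- arXiv:solv-int/9809008 — 2 statements merged into one kernel-verified Lean document; each statement's English description precedes it below -/
import Mathlib

section
/- For the many-particle Hénon–Heiles system (the case N = 3 of the hierarchy), define 𝒰₃ = −2q_{n+1}³ − q_{n+1}Σ_{i=1}^n q_i² + (1/2)Σ_{i=1}^n A_i q_i² + 2B q_{n+1}², the Hamiltonian H₃ = (1/2)Σ_{i=1}^{n+1} p_i² + 𝒰₃, Q₃(z) = z + 2q_{n+1}, and W₃(z) = 4z² + 4zq_{n+1} + 4Bz + 4q_{n+1}² + Σ_{k=1}^n q_k² + Σ_{i=1}^n p_i²/(z+A_i). Then for every z ∈ ℝ \ {−A₁,…,−A_n}: {H₃, U(z)} = −2V(z), {H₃, V(z)} = W₃(z) − U(z)Q₃(z), and {H₃, W₃(z)} = 2Q₃(z)V(z); i.e., the matrix L₃(z) = [[V(z),U(z)],[W₃(z),−V(z)]] satisfies the Lax equation with M₃(z) = [[0,1],[Q₃(z),0]] along the flow of H₃. -/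
open scoped BigOperators
open Finset Matrix

noncomputable section

/-- Phase space ℝ^{2m}: a point is a pair (q, p). -/
abbrev Phase (m : ℕ) := (Fin m → ℝ) × (Fin m → ℝ)

/-- Partial derivative with respect to `q i`. -/
noncomputable def pdq {m : ℕ} (f : Phase m → ℝ) (i : Fin m) (x : Phase m) : ℝ :=
  deriv (fun t => f (Function.update x.1 i t, x.2)) (x.1 i)

/-- Partial derivative with respect to `p i`. -/
noncomputable def pdp {m : ℕ} (f : Phase m → ℝ) (i : Fin m) (x : Phase m) : ℝ :=
  deriv (fun t => f (x.1, Function.update x.2 i t)) (x.2 i)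

/-- Canonical Poisson bracket {f,g} = Σ_i (∂f/∂p_i ∂g/∂q_i − ∂f/∂q_i ∂g/∂p_i). -/
noncomputable def poisson {m : ℕ} (f g : Phase m → ℝ) (x : Phase m) : ℝ :=
  ∑ i, (pdp f i x * pdq g i x - pdq f i x * pdp g i x)

/-- Partial derivative of a function of q only. -/
noncomputable def pdq' {m : ℕ} (f : (Fin m → ℝ) → ℝ) (i : Fin m) (q : Fin m → ℝ) : ℝ :=
  deriv (fun t => f (Function.update q i t)) (q i)

/-- U(z) = 4z − 4q_{n+1} + 4B − Σ q_i²/(z+A_i). -/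
noncomputable def Ufun (n : ℕ) (A : Fin n → ℝ) (B : ℝ) (z : ℝ) (x : Phase (n+1)) : ℝ :=
  4 * z - 4 * x.1 (Fin.last n) + 4 * B - ∑ i : Fin n, (x.1 i.castSucc) ^ 2 / (z + A i)

/-- V(z) = 2p_{n+1} + Σ p_i q_i/(z+A_i). -/
noncomputable def Vfun (n : ℕ) (A : Fin n → ℝ) (z : ℝ) (x : Phase (n+1)) : ℝ :=
  2 * x.2 (Fin.last n) + ∑ i : Fin n, x.2 i.castSucc * x.1 i.castSucc / (z + A i)

/-- 𝒰₃ = −2q_{n+1}³ − q_{n+1}Σq_i² + (1/2)ΣA_iq_i² + 2Bq_{n+1}². -/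
noncomputable def U3 (n : ℕ) (A : Fin n → ℝ) (B : ℝ) (q : Fin (n+1) → ℝ) : ℝ :=
  -2 * (q (Fin.last n)) ^ 3 - q (Fin.last n) * ∑ i : Fin n, (q i.castSucc) ^ 2
    + (1/2) * ∑ i : Fin n, A i * (q i.castSucc) ^ 2 + 2 * B * (q (Fin.last n)) ^ 2

/-- H₃ = (1/2)Σ p_i² + 𝒰₃. -/
noncomputable def H3 (n : ℕ) (A : Fin n → ℝ) (B : ℝ) (x : Phase (n+1)) : ℝ :=
  (1/2) * ∑ i : Fin (n+1), (x.2 i) ^ 2 + U3 n A B x.1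

/-- Q₃(z) = z + 2q_{n+1}. -/
noncomputable def Q3 (n : ℕ) (z : ℝ) (x : Phase (n+1)) : ℝ :=
  z + 2 * x.1 (Fin.last n)

/-- W₃(z) = 4z² + 4zq_{n+1} + 4Bz + 4q_{n+1}² + Σq_k² + Σp_i²/(z+A_i). -/
noncomputable def W3 (n : ℕ) (A : Fin n → ℝ) (B : ℝ) (z : ℝ) (x : Phase (n+1)) : ℝ :=
  4 * z ^ 2 + 4 * z * x.1 (Fin.last n) + 4 * B * z + 4 * (x.1 (Fin.last n)) ^ 2
    + ∑ k : Fin n, (x.1 k.castSucc) ^ 2 + ∑ i : Fin n, (x.2 i.castSucc) ^ 2 / (z + A i)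

lemma update_comp_castSucc {n : ℕ} (q : Fin (n+1) → ℝ) (k : Fin n) (t : ℝ) (i : Fin n) :
    Function.update q k.castSucc t i.castSucc = Function.update (fun j => q j.castSucc) k t i := by
  rcases eq_or_ne i k with h | h
  · subst h; simp
  · rw [Function.update_of_ne (fun hc => h (Fin.castSucc_injective n hc)),
      Function.update_of_ne h]

lemma update_castSucc_last {n : ℕ} (q : Fin (n+1) → ℝ) (k : Fin n) (t : ℝ) :
    Function.update q k.castSucc t (Fin.last n) = q (Fin.last n) :=
  Function.update_of_ne (Fin.castSucc_lt_last k).ne' _ _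

lemma update_last_castSucc {n : ℕ} (q : Fin (n+1) → ℝ) (t : ℝ) (i : Fin n) :
    Function.update q (Fin.last n) t i.castSucc = q i.castSucc :=
  Function.update_of_ne (Fin.castSucc_lt_last i).ne _ _

lemma hasDerivAt_update_sum {m : ℕ} (f : Fin m → ℝ → ℝ) (j : Fin m) (v : Fin m → ℝ)
    (d : ℝ) (hf : HasDerivAt (f j) d (v j)) :
    HasDerivAt (fun t => ∑ i, f i (Function.update v j t i)) d (v j) := by
  have h : (fun t => ∑ i, f i (Function.update v j t i))
      = fun t => f j t + ∑ i ∈ Finset.univ.erase j, f i (v i) := by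
    funext t
    rw [← Finset.add_sum_erase _ _ (Finset.mem_univ j), Function.update_self]
    congr 1
    exact Finset.sum_congr rfl fun i hi => by
      rw [Function.update_of_ne (Finset.ne_of_mem_erase hi)]
  rw [h]
  exact hf.add_const _

lemma hasDerivAt_update_sum_castSucc {n : ℕ} (f : Fin n → ℝ → ℝ) (k : Fin n)
    (q : Fin (n+1) → ℝ) (d : ℝ) (hf : HasDerivAt (f k) d (q k.castSucc)) :
    HasDerivAt (fun t => ∑ i, f i (Function.update q k.castSucc t i.castSucc)) d
      (q k.castSucc) := by
  have h : (fun t => ∑ i, f i (Function.update q k.castSucc t i.castSucc))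
      = fun t => ∑ i, f i (Function.update (fun j => q j.castSucc) k t i) := by
    funext t; exact Finset.sum_congr rfl fun i _ => by rw [update_comp_castSucc]
  rw [h]
  exact hasDerivAt_update_sum f k (fun j => q j.castSucc) d hf

variable {n : ℕ} (A : Fin n → ℝ) (B z : ℝ) (x : Phase (n+1)) (k : Fin n)

-- Ufun derivatives
lemma pdp_Ufun (i : Fin (n+1)) : pdp (Ufun n A B z) i x = 0 := by
  unfold pdp Ufun; simp

lemma pdq_Ufun_castSucc : pdq (Ufun n A B z) k.castSucc x
    = -(2 * x.1 k.castSucc / (z + A k)) := by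
  unfold pdq Ufun
  have hs : HasDerivAt
      (fun t : ℝ => ∑ i : Fin n, (Function.update x.1 k.castSucc t i.castSucc) ^ 2 / (z + A i))
      (2 * x.1 k.castSucc / (z + A k)) (x.1 k.castSucc) :=
    hasDerivAt_update_sum_castSucc (fun i s => s ^ 2 / (z + A i)) k x.1 _
      (by simpa using ((hasDerivAt_pow 2 (x.1 k.castSucc)).div_const (z + A k)))
  have h : HasDerivAt
      (fun t : ℝ => 4 * z - 4 * Function.update x.1 k.castSucc t (Fin.last n) + 4 * B
        - ∑ i : Fin n, (Function.update x.1 k.castSucc t i.castSucc) ^ 2 / (z + A i))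
      (-(2 * x.1 k.castSucc / (z + A k))) (x.1 k.castSucc) := by
    have h2 := (hasDerivAt_const (x.1 k.castSucc)
      (4 * z - 4 * x.1 (Fin.last n) + 4 * B)).sub hs
    rw [zero_sub] at h2
    refine h2.congr_of_eventuallyEq (Filter.Eventually.of_forall fun t => ?_)
    simp only [update_castSucc_last, Pi.sub_apply]
  exact h.deriv

lemma pdq_Ufun_last : pdq (Ufun n A B z) (Fin.last n) x = -4 := by
  unfold pdq Ufun
  have h : HasDerivAt
      (fun t : ℝ => 4 * z - 4 * Function.update x.1 (Fin.last n) t (Fin.last n) + 4 * B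
        - ∑ i : Fin n, (Function.update x.1 (Fin.last n) t i.castSucc) ^ 2 / (z + A i))
      (-4) (x.1 (Fin.last n)) := by
    have h1 : HasDerivAt (fun t : ℝ => 4 * z - 4 * t + 4 * B
        - ∑ i : Fin n, (x.1 i.castSucc) ^ 2 / (z + A i)) (-4) (x.1 (Fin.last n)) := by
      have := ((((hasDerivAt_id (x.1 (Fin.last n))).const_mul (4:ℝ)).const_sub (4*z)).add_const
        (4 * B)).sub_const (∑ i : Fin n, (x.1 i.castSucc) ^ 2 / (z + A i))
      refine HasDerivAt.congr_deriv (this.congr_of_eventuallyEq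
        (Filter.Eventually.of_forall fun t => by simp only [id_eq]; try ring)) (by norm_num)
    refine h1.congr_of_eventuallyEq (Filter.Eventually.of_forall fun t => ?_)
    simp only [Function.update_self, update_last_castSucc]
  exact h.deriv

-- Vfun derivatives
lemma pdq_Vfun_castSucc : pdq (Vfun n A z) k.castSucc x
    = x.2 k.castSucc / (z + A k) := by
  unfold pdq Vfun
  have hs : HasDerivAt
      (fun t : ℝ => ∑ i : Fin n,
        x.2 i.castSucc * Function.update x.1 k.castSucc t i.castSucc / (z + A i))
      (x.2 k.castSucc / (z + A k)) (x.1 k.castSucc) :=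
    hasDerivAt_update_sum_castSucc (fun i s => x.2 i.castSucc * s / (z + A i)) k x.1 _
      (by simpa using (((hasDerivAt_id (x.1 k.castSucc)).const_mul
        (x.2 k.castSucc)).div_const (z + A k)))
  exact (hs.const_add (2 * x.2 (Fin.last n))).deriv

lemma pdq_Vfun_last : pdq (Vfun n A z) (Fin.last n) x = 0 := by
  unfold pdq Vfun
  have h : (fun t : ℝ => 2 * x.2 (Fin.last n)
      + ∑ i : Fin n, x.2 i.castSucc * Function.update x.1 (Fin.last n) t i.castSucc / (z + A i))
      = fun _ : ℝ => 2 * x.2 (Fin.last n)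
      + ∑ i : Fin n, x.2 i.castSucc * x.1 i.castSucc / (z + A i) := by
    funext t; congr 1
    exact Finset.sum_congr rfl fun i _ => by rw [update_last_castSucc]
  rw [show (fun t => 2 * x.2 (Fin.last n)
      + ∑ i : Fin n, x.2 i.castSucc * Function.update x.1 (Fin.last n) t i.castSucc / (z + A i))
      = fun _ : ℝ => 2 * x.2 (Fin.last n)
      + ∑ i : Fin n, x.2 i.castSucc * x.1 i.castSucc / (z + A i) from h, deriv_const]

lemma pdp_Vfun_castSucc : pdp (Vfun n A z) k.castSucc x
    = x.1 k.castSucc / (z + A k) := by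
  unfold pdp Vfun
  have hs : HasDerivAt
      (fun t : ℝ => ∑ i : Fin n,
        Function.update x.2 k.castSucc t i.castSucc * x.1 i.castSucc / (z + A i))
      (x.1 k.castSucc / (z + A k)) (x.2 k.castSucc) :=
    hasDerivAt_update_sum_castSucc (fun i s => s * x.1 i.castSucc / (z + A i)) k x.2 _
      (by simpa using (((hasDerivAt_id (x.2 k.castSucc)).mul_const
        (x.1 k.castSucc)).div_const (z + A k)))
  have h : HasDerivAt
      (fun t : ℝ => 2 * Function.update x.2 k.castSucc t (Fin.last n)
        + ∑ i : Fin n, Function.update x.2 k.castSucc t i.castSucc * x.1 i.castSucc / (z + A i))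
      (x.1 k.castSucc / (z + A k)) (x.2 k.castSucc) := by
    refine (hs.const_add (2 * x.2 (Fin.last n))).congr_of_eventuallyEq
      (Filter.Eventually.of_forall fun t => ?_)
    simp only [update_castSucc_last]
  exact h.deriv

lemma pdp_Vfun_last : pdp (Vfun n A z) (Fin.last n) x = 2 := by
  unfold pdp Vfun
  have h : HasDerivAt
      (fun t : ℝ => 2 * Function.update x.2 (Fin.last n) t (Fin.last n)
        + ∑ i : Fin n, Function.update x.2 (Fin.last n) t i.castSucc * x.1 i.castSucc / (z + A i))
      2 (x.2 (Fin.last n)) := by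
    have h1 : HasDerivAt (fun t : ℝ => 2 * t
        + ∑ i : Fin n, x.2 i.castSucc * x.1 i.castSucc / (z + A i)) 2 (x.2 (Fin.last n)) := by
      have := ((hasDerivAt_id (x.2 (Fin.last n))).const_mul (2:ℝ)).add_const
        (∑ i : Fin n, x.2 i.castSucc * x.1 i.castSucc / (z + A i))
      refine HasDerivAt.congr_deriv (this.congr_of_eventuallyEq
        (Filter.Eventually.of_forall fun t => by simp only [id_eq])) (by norm_num)
    refine h1.congr_of_eventuallyEq (Filter.Eventually.of_forall fun t => ?_)
    simp only [Function.update_self, update_last_castSucc]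
  exact h.deriv

-- W3 derivatives
lemma pdq_W3_castSucc : pdq (W3 n A B z) k.castSucc x = 2 * x.1 k.castSucc := by
  unfold pdq W3
  have hs : HasDerivAt
      (fun t : ℝ => ∑ i : Fin n, (Function.update x.1 k.castSucc t i.castSucc) ^ 2)
      (2 * x.1 k.castSucc) (x.1 k.castSucc) :=
    hasDerivAt_update_sum_castSucc (fun _ s => s ^ 2) k x.1 _
      (by simpa using hasDerivAt_pow 2 (x.1 k.castSucc))
  have h : HasDerivAt
      (fun t : ℝ => 4 * z ^ 2 + 4 * z * Function.update x.1 k.castSucc t (Fin.last n) + 4 * B * z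
        + 4 * (Function.update x.1 k.castSucc t (Fin.last n)) ^ 2
        + ∑ i : Fin n, (Function.update x.1 k.castSucc t i.castSucc) ^ 2
        + ∑ i : Fin n, (x.2 i.castSucc) ^ 2 / (z + A i))
      (2 * x.1 k.castSucc) (x.1 k.castSucc) := by
    have h2 := (hs.const_add (4 * z ^ 2 + 4 * z * x.1 (Fin.last n) + 4 * B * z
      + 4 * (x.1 (Fin.last n)) ^ 2)).add_const (∑ i : Fin n, (x.2 i.castSucc) ^ 2 / (z + A i))
    refine h2.congr_of_eventuallyEq (Filter.Eventually.of_forall fun t => ?_)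
    simp only [update_castSucc_last]; try ring
  exact h.deriv

lemma pdq_W3_last : pdq (W3 n A B z) (Fin.last n) x
    = 4 * z + 8 * x.1 (Fin.last n) := by
  unfold pdq W3
  have h : HasDerivAt
      (fun t : ℝ => 4 * z ^ 2 + 4 * z * Function.update x.1 (Fin.last n) t (Fin.last n)
        + 4 * B * z + 4 * (Function.update x.1 (Fin.last n) t (Fin.last n)) ^ 2
        + ∑ i : Fin n, (Function.update x.1 (Fin.last n) t i.castSucc) ^ 2
        + ∑ i : Fin n, (x.2 i.castSucc) ^ 2 / (z + A i))
      (4 * z + 8 * x.1 (Fin.last n)) (x.1 (Fin.last n)) := by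
    have hp : HasDerivAt (fun t : ℝ => 4 * z ^ 2 + 4 * z * t + 4 * B * z + 4 * t ^ 2)
        (4 * z + 8 * x.1 (Fin.last n)) (x.1 (Fin.last n)) := by
      have := ((((hasDerivAt_id (x.1 (Fin.last n))).const_mul (4*z)).const_add
        (4 * z ^ 2)).add_const (4 * B * z)).add
        ((hasDerivAt_pow 2 (x.1 (Fin.last n))).const_mul 4)
      refine HasDerivAt.congr_deriv (this.congr_of_eventuallyEq
        (Filter.Eventually.of_forall fun t => by simp only [id_eq, Pi.add_apply]; try ring)) ?_
      push_cast; ring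
    have h1 := (hp.add_const (∑ i : Fin n, (x.1 i.castSucc) ^ 2)).add_const
      (∑ i : Fin n, (x.2 i.castSucc) ^ 2 / (z + A i))
    refine h1.congr_of_eventuallyEq (Filter.Eventually.of_forall fun t => ?_)
    simp only [Function.update_self, update_last_castSucc]
  exact h.deriv

lemma pdp_W3_castSucc : pdp (W3 n A B z) k.castSucc x
    = 2 * x.2 k.castSucc / (z + A k) := by
  unfold pdp W3
  have hs : HasDerivAt
      (fun t : ℝ => ∑ i : Fin n, (Function.update x.2 k.castSucc t i.castSucc) ^ 2 / (z + A i))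
      (2 * x.2 k.castSucc / (z + A k)) (x.2 k.castSucc) :=
    hasDerivAt_update_sum_castSucc (fun i s => s ^ 2 / (z + A i)) k x.2 _
      (by simpa using ((hasDerivAt_pow 2 (x.2 k.castSucc)).div_const (z + A k)))
  exact (hs.const_add (4 * z ^ 2 + 4 * z * x.1 (Fin.last n) + 4 * B * z
    + 4 * (x.1 (Fin.last n)) ^ 2 + ∑ i : Fin n, (x.1 i.castSucc) ^ 2)).deriv

lemma pdp_W3_last : pdp (W3 n A B z) (Fin.last n) x = 0 := by
  unfold pdp W3
  have h : (fun t : ℝ => 4 * z ^ 2 + 4 * z * x.1 (Fin.last n) + 4 * B * z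
      + 4 * (x.1 (Fin.last n)) ^ 2 + ∑ i : Fin n, (x.1 i.castSucc) ^ 2
      + ∑ i : Fin n, (Function.update x.2 (Fin.last n) t i.castSucc) ^ 2 / (z + A i))
      = (fun _ : ℝ => 4 * z ^ 2 + 4 * z * x.1 (Fin.last n) + 4 * B * z
      + 4 * (x.1 (Fin.last n)) ^ 2 + ∑ i : Fin n, (x.1 i.castSucc) ^ 2
      + ∑ i : Fin n, (x.2 i.castSucc) ^ 2 / (z + A i)) := by
    funext t; congr 1
    exact Finset.sum_congr rfl fun i _ => by rw [update_last_castSucc]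
  rw [h, deriv_const]

-- H3 derivatives
lemma pdp_H3 (i : Fin (n+1)) : pdp (H3 n A B) i x = x.2 i := by
  unfold pdp H3
  have hs : HasDerivAt
      (fun t : ℝ => ∑ j : Fin (n+1), (Function.update x.2 i t j) ^ 2)
      (2 * x.2 i) (x.2 i) :=
    hasDerivAt_update_sum (fun _ s => s ^ 2) i x.2 _
      (by simpa using hasDerivAt_pow 2 (x.2 i))
  have h : HasDerivAt
      (fun t : ℝ => (1/2) * ∑ j : Fin (n+1), (Function.update x.2 i t j) ^ 2 + U3 n A B x.1)
      (x.2 i) (x.2 i) := by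
    refine HasDerivAt.congr_deriv (((hs.const_mul (1/2 : ℝ)).add_const (U3 n A B x.1))) ?_
    ring
  exact h.deriv

lemma pdq_H3_castSucc : pdq (H3 n A B) k.castSucc x
    = -2 * x.1 (Fin.last n) * x.1 k.castSucc + A k * x.1 k.castSucc := by
  unfold pdq H3 U3
  have hs1 : HasDerivAt
      (fun t : ℝ => ∑ i : Fin n, (Function.update x.1 k.castSucc t i.castSucc) ^ 2)
      (2 * x.1 k.castSucc) (x.1 k.castSucc) :=
    hasDerivAt_update_sum_castSucc (fun _ s => s ^ 2) k x.1 _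
      (by simpa using hasDerivAt_pow 2 (x.1 k.castSucc))
  have hs2 : HasDerivAt
      (fun t : ℝ => ∑ i : Fin n, A i * (Function.update x.1 k.castSucc t i.castSucc) ^ 2)
      (A k * (2 * x.1 k.castSucc)) (x.1 k.castSucc) :=
    hasDerivAt_update_sum_castSucc (fun i s => A i * s ^ 2) k x.1 _
      (by simpa using (hasDerivAt_pow 2 (x.1 k.castSucc)).const_mul (A k))
  have h : HasDerivAt
      (fun t : ℝ => (1/2) * ∑ i : Fin (n+1), (x.2 i) ^ 2
        + (-2 * (Function.update x.1 k.castSucc t (Fin.last n)) ^ 3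
          - Function.update x.1 k.castSucc t (Fin.last n)
            * ∑ i : Fin n, (Function.update x.1 k.castSucc t i.castSucc) ^ 2
          + (1/2) * ∑ i : Fin n, A i * (Function.update x.1 k.castSucc t i.castSucc) ^ 2
          + 2 * B * (Function.update x.1 k.castSucc t (Fin.last n)) ^ 2))
      (-2 * x.1 (Fin.last n) * x.1 k.castSucc + A k * x.1 k.castSucc) (x.1 k.castSucc) := by
    have hcomb := (((hs1.const_mul (x.1 (Fin.last n))).const_sub
      (-2 * (x.1 (Fin.last n)) ^ 3)).add (hs2.const_mul (1/2 : ℝ))).add_const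
      (2 * B * (x.1 (Fin.last n)) ^ 2)
    have h2 := hcomb.const_add ((1/2) * ∑ i : Fin (n+1), (x.2 i) ^ 2)
    refine HasDerivAt.congr_deriv (h2.congr_of_eventuallyEq
      (Filter.Eventually.of_forall fun t => ?_)) ?_
    · simp only [update_castSucc_last, Pi.add_apply]; try ring
    · ring
  exact h.deriv

lemma pdq_H3_last : pdq (H3 n A B) (Fin.last n) x
    = -6 * (x.1 (Fin.last n)) ^ 2 - (∑ i : Fin n, (x.1 i.castSucc) ^ 2)
      + 4 * B * x.1 (Fin.last n) := by
  unfold pdq H3 U3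
  have h1 : HasDerivAt
      (fun t : ℝ => (1/2) * ∑ i : Fin (n+1), (x.2 i) ^ 2
        + (-2 * t ^ 3 - t * ∑ i : Fin n, (x.1 i.castSucc) ^ 2
          + (1/2) * ∑ i : Fin n, A i * (x.1 i.castSucc) ^ 2 + 2 * B * t ^ 2))
      (-6 * (x.1 (Fin.last n)) ^ 2 - (∑ i : Fin n, (x.1 i.castSucc) ^ 2)
        + 4 * B * x.1 (Fin.last n)) (x.1 (Fin.last n)) := by
    have := (((((hasDerivAt_pow 3 (x.1 (Fin.last n))).const_mul (-2:ℝ)).sub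
      ((hasDerivAt_id (x.1 (Fin.last n))).mul_const (∑ i : Fin n, (x.1 i.castSucc) ^ 2))).add_const
      ((1/2) * ∑ i : Fin n, A i * (x.1 i.castSucc) ^ 2)).add
      ((hasDerivAt_pow 2 (x.1 (Fin.last n))).const_mul (2*B))).const_add
      ((1/2) * ∑ i : Fin (n+1), (x.2 i) ^ 2)
    refine HasDerivAt.congr_deriv (this.congr_of_eventuallyEq
      (Filter.Eventually.of_forall fun t => by simp only [id_eq, Pi.add_apply, Pi.sub_apply]; try ring)) ?_
    push_cast; ring
  have h : HasDerivAt
      (fun t : ℝ => (1/2) * ∑ i : Fin (n+1), (x.2 i) ^ 2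
        + (-2 * (Function.update x.1 (Fin.last n) t (Fin.last n)) ^ 3
          - Function.update x.1 (Fin.last n) t (Fin.last n)
            * ∑ i : Fin n, (Function.update x.1 (Fin.last n) t i.castSucc) ^ 2
          + (1/2) * ∑ i : Fin n, A i * (Function.update x.1 (Fin.last n) t i.castSucc) ^ 2
          + 2 * B * (Function.update x.1 (Fin.last n) t (Fin.last n)) ^ 2))
      (-6 * (x.1 (Fin.last n)) ^ 2 - (∑ i : Fin n, (x.1 i.castSucc) ^ 2)
        + 4 * B * x.1 (Fin.last n)) (x.1 (Fin.last n)) := by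
    refine h1.congr_of_eventuallyEq (Filter.Eventually.of_forall fun t => ?_)
    simp only [Function.update_self, update_last_castSucc]
  exact h.deriv

/-- Lax equation for the many-particle Hénon–Heiles system (N = 3). -/
theorem lax_equation_henon_heiles
    (n : ℕ) (hn : 1 ≤ n) (A : Fin n → ℝ) (B : ℝ) :
    ∀ z : ℝ, (∀ i : Fin n, z ≠ -A i) → ∀ x : Phase (n+1),
      poisson (H3 n A B) (Ufun n A B z) x = -2 * Vfun n A z x ∧
      poisson (H3 n A B) (Vfun n A z) x = W3 n A B z x - Ufun n A B z x * Q3 n z x ∧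
      poisson (H3 n A B) (W3 n A B z) x = 2 * Q3 n z x * Vfun n A z x := by
  intro z hz x
  have hz' : ∀ k : Fin n, z + A k ≠ 0 := fun k h => hz k (by linarith)
  refine ⟨?_, ?_, ?_⟩
  · unfold poisson
    rw [Fin.sum_univ_castSucc]
    simp only [pdp_H3, pdq_Ufun_castSucc, pdq_Ufun_last, pdp_Ufun, mul_zero, sub_zero]
    unfold Vfun
    rw [Finset.sum_congr rfl (fun i _ =>
      show x.2 i.castSucc * -(2 * x.1 i.castSucc / (z + A i))
        = -2 * (x.2 i.castSucc * x.1 i.castSucc / (z + A i)) from by ring),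
      ← Finset.mul_sum]
    ring
  · unfold poisson
    rw [Fin.sum_univ_castSucc]
    simp only [pdp_H3, pdq_Vfun_castSucc, pdq_Vfun_last, pdp_Vfun_castSucc, pdp_Vfun_last,
      pdq_H3_castSucc, pdq_H3_last, mul_zero, zero_sub]
    rw [Finset.sum_congr rfl (fun i _ =>
      show x.2 i.castSucc * (x.2 i.castSucc / (z + A i))
          - (-2 * x.1 (Fin.last n) * x.1 i.castSucc + A i * x.1 i.castSucc)
            * (x.1 i.castSucc / (z + A i))
        = (x.2 i.castSucc) ^ 2 / (z + A i)
          + (z + 2 * x.1 (Fin.last n)) * ((x.1 i.castSucc) ^ 2 / (z + A i))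
          - (x.1 i.castSucc) ^ 2 from by
        have hne := hz' i
        field_simp
        ring)]
    rw [Finset.sum_sub_distrib, Finset.sum_add_distrib, ← Finset.mul_sum]
    unfold W3 Ufun Q3
    ring
  · unfold poisson
    rw [Fin.sum_univ_castSucc]
    simp only [pdp_H3, pdq_W3_castSucc, pdq_W3_last, pdp_W3_castSucc, pdp_W3_last,
      pdq_H3_castSucc, pdq_H3_last, mul_zero, sub_zero]
    rw [Finset.sum_congr rfl (fun i _ =>
      show x.2 i.castSucc * (2 * x.1 i.castSucc)
          - (-2 * x.1 (Fin.last n) * x.1 i.castSucc + A i * x.1 i.castSucc)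
            * (2 * x.2 i.castSucc / (z + A i))
        = 2 * (z + 2 * x.1 (Fin.last n))
            * (x.2 i.castSucc * x.1 i.castSucc / (z + A i)) from by
        have hne := hz' i
        field_simp
        ring),
      ← Finset.mul_sum]
    unfold Q3 Vfun
    ring
end
end

section
/- Under the stated recurrence hypotheses, the Lax matrix satisfies the linear r-matrix algebra with dynamical r-matrix: for all x ≠ y in ℝ \ {−A₁,…,−A_n}, the 4×4 matrix of Poisson brackets ({(L_N(x))_{ij}, (L_N(y))_{kl}})_{(i,k),(j,l)} equals [r(x−y), L₁(x) + L₂(y)] + [s_N(x,y), L₁(x) − L₂(y)], where L_N(z) = [[V(z),U(z)],[W_N(z),−V(z)]], L₁(x) = L_N(x)⊗I₂, L₂(y) = I₂⊗L_N(y), r(x−y) = (2/(x−y))·P, and s_N(x,y) = 2α_N(x,y)·(σ₋⊗σ₋). -/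
open scoped BigOperators
open Finset Matrix

noncomputable section

/-- Q_N(z) = z^{N−2} − (1/2) Σ_{k=0}^{N−3} (∂𝒰_{N−k−1}/∂q_{n+1}) z^k. -/
noncomputable def Qfun (n N : ℕ) (𝒰 : ℕ → (Fin (n+1) → ℝ) → ℝ) (z : ℝ)
    (x : Phase (n+1)) : ℝ :=
  z ^ (N-2) - (1/2) * ∑ k ∈ Finset.range (N-2), pdq' (𝒰 (N-k-1)) (Fin.last n) x.1 * z ^ k

/-- W_N(z) = 4z^{N−1} − 2 Σ_{k=0}^{N−2} 𝒰_{N−k−1} z^k + Σ p_i²/(z+A_i). -/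
noncomputable def Wfun (n N : ℕ) (A : Fin n → ℝ) (𝒰 : ℕ → (Fin (n+1) → ℝ) → ℝ) (z : ℝ)
    (x : Phase (n+1)) : ℝ :=
  4 * z ^ (N-1) - 2 * ∑ k ∈ Finset.range (N-1), 𝒰 (N-k-1) x.1 * z ^ k
    + ∑ i : Fin n, (x.2 i.castSucc) ^ 2 / (z + A i)

/-- α_N(x,y) = (Q_N(x) − Q_N(y))/(x − y). -/
noncomputable def alphaFun (n N : ℕ) (𝒰 : ℕ → (Fin (n+1) → ℝ) → ℝ) (z w : ℝ)
    (x : Phase (n+1)) : ℝ :=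
  (Qfun n N 𝒰 z x - Qfun n N 𝒰 w x) / (z - w)

/-- The hierarchy recurrence hypotheses on the potentials 𝒰₀,…,𝒰_M. -/
def Recur (n M : ℕ) (A : Fin n → ℝ) (B : ℝ) (𝒰 : ℕ → (Fin (n+1) → ℝ) → ℝ) : Prop :=
  (∀ m ≤ M, ContDiff ℝ (⊤ : ℕ∞) (𝒰 m)) ∧
  (∀ q, 𝒰 0 q = 0) ∧
  (∀ q : Fin (n+1) → ℝ, 𝒰 1 q = -2 * q (Fin.last n) - 2 * B) ∧
  (∀ q : Fin (n+1) → ℝ,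
      𝒰 2 q = -2 * (q (Fin.last n)) ^ 2 - (1/2) * ∑ i : Fin n, (q i.castSucc) ^ 2) ∧
  (∀ m, 2 ≤ m → m ≤ M → ∀ q : Fin (n+1) → ℝ,
    (∀ i : Fin n, pdq' (𝒰 m) i.castSucc q
        = (1/2) * q i.castSucc * pdq' (𝒰 (m-1)) (Fin.last n) q
          - A i * pdq' (𝒰 (m-1)) i.castSucc q) ∧
    pdq' (𝒰 m) (Fin.last n) q
        = 𝒰 (m-1) q + (1/2) * ∑ i : Fin n, q i.castSucc * pdq' (𝒰 (m-1)) i.castSucc q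
          + (q (Fin.last n) - B) * pdq' (𝒰 (m-1)) (Fin.last n) q)

/-- The Hamiltonian H_N = (1/2) Σ p_i² + 𝒰_N. -/
noncomputable def Hfun (n N : ℕ) (𝒰 : ℕ → (Fin (n+1) → ℝ) → ℝ) (x : Phase (n+1)) : ℝ :=
  (1/2) * ∑ i : Fin (n+1), (x.2 i) ^ 2 + 𝒰 N x.1

open Kronecker

/-- The Lax matrix L_N(z). -/
noncomputable def Lmat (n N : ℕ) (A : Fin n → ℝ) (B : ℝ) (𝒰 : ℕ → (Fin (n+1) → ℝ) → ℝ)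
    (z : ℝ) (x : Phase (n+1)) : Matrix (Fin 2) (Fin 2) ℝ :=
  !![Vfun n A z x, Ufun n A B z x; Wfun n N A 𝒰 z x, -Vfun n A z x]

/-- The 4×4 permutation matrix P_{(i,k),(j,l)} = δ_{il}δ_{kj}. -/
def Pmat : Matrix (Fin 2 × Fin 2) (Fin 2 × Fin 2) ℝ :=
  fun a b => if a.1 = b.2 ∧ a.2 = b.1 then 1 else 0

/-- σ₋, whose only nonzero entry is (σ₋)₂₁ = 1. -/
def sigmaM : Matrix (Fin 2) (Fin 2) ℝ := !![0, 0; 1, 0]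

/-- Matrix commutator. -/
def mcomm {α : Type*} [Mul α] [Sub α] (M N : α) : α := M * N - N * M

section AuxDeriv

lemma differentiable_update {m : ℕ} (q : Fin m → ℝ) (j : Fin m) :
    Differentiable ℝ (fun t : ℝ => Function.update q j t) := by
  rw [differentiable_pi]
  intro i
  rcases eq_or_ne i j with h | h
  · subst h
    simp only [Function.update_apply, if_pos rfl]
    exact differentiable_id
  · simp only [Function.update_apply, if_neg h]
    exact differentiable_const _

lemma hasDerivAt_comp_update {m : ℕ} (f : (Fin m → ℝ) → ℝ) (hf : ContDiff ℝ (⊤ : ℕ∞) f)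
    (q : Fin m → ℝ) (j : Fin m) :
    HasDerivAt (fun t => f (Function.update q j t)) (pdq' f j q) (q j) := by
  have hd : DifferentiableAt ℝ (fun t => f (Function.update q j t)) (q j) :=
    ((hf.differentiable (by simp)).differentiableAt).comp _
      ((differentiable_update q j).differentiableAt)
  exact hd.hasDerivAt

end AuxDeriv
section AuxVals

@[simp] lemma castSucc_ne_last'' {n : ℕ} (i : Fin n) : i.castSucc ≠ Fin.last n :=
  (Fin.castSucc_lt_last i).ne

@[simp] lemma last_ne_castSucc'' {n : ℕ} (i : Fin n) : Fin.last n ≠ i.castSucc :=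
  (Fin.castSucc_lt_last i).ne'

variable {n N : ℕ} {A : Fin n → ℝ} {B z : ℝ} {𝒰 : ℕ → (Fin (n+1) → ℝ) → ℝ} {pt : Phase (n+1)}

lemma pdp_U (j : Fin (n+1)) : pdp (fun w => Ufun n A B z w) j pt = 0 := by
  have h : (fun t => Ufun n A B z (pt.1, Function.update pt.2 j t))
      = fun _ : ℝ => Ufun n A B z pt := by
    funext t; simp [Ufun]
  unfold pdp; rw [h]; exact deriv_const _ _

lemma pdq_U_c (i : Fin n) :
    pdq (fun w => Ufun n A B z w) i.castSucc pt = -(2 * pt.1 i.castSucc / (z + A i)) := by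
  unfold pdq
  have hfun : (fun t => Ufun n A B z (Function.update pt.1 i.castSucc t, pt.2))
      = fun t => (4*z - 4*pt.1 (Fin.last n) + 4*B) -
          ∑ j : Fin n, (if j = i then t else pt.1 j.castSucc)^2 / (z + A j) := by
    funext t; simp [Ufun, Function.update_apply, Fin.castSucc_inj]
  rw [hfun]
  have h : ∀ j ∈ (Finset.univ : Finset (Fin n)), HasDerivAt
      (fun t : ℝ => (if j = i then t else pt.1 j.castSucc)^2 / (z + A j))
      (if j = i then 2 * pt.1 i.castSucc / (z + A i) else 0) (pt.1 i.castSucc) := by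
    intro j _
    rcases eq_or_ne j i with h | h
    · subst h; simp only [if_pos rfl]
      simpa using (hasDerivAt_pow 2 (pt.1 j.castSucc)).div_const (z + A j)
    · simp only [if_neg h]; exact hasDerivAt_const _ _
  have H := HasDerivAt.const_sub (4*z - 4*pt.1 (Fin.last n) + 4*B) (HasDerivAt.fun_sum h)
  rw [H.deriv, Finset.sum_ite_eq' Finset.univ i]
  simp

lemma pdq_U_l :
    pdq (fun w => Ufun n A B z w) (Fin.last n) pt = -4 := by
  unfold pdq
  have hfun : (fun t => Ufun n A B z (Function.update pt.1 (Fin.last n) t, pt.2))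
      = fun t => 4*z - 4*t + 4*B - ∑ j : Fin n, (pt.1 j.castSucc)^2 / (z + A j) := by
    funext t; simp [Ufun, Function.update_apply]
  rw [hfun]
  have H := ((((hasDerivAt_id' (pt.1 (Fin.last n))).const_mul 4).const_sub (4*z)).add_const
    (4*B)).sub_const (∑ j : Fin n, (pt.1 j.castSucc)^2 / (z + A j))
  rw [H.deriv]; norm_num

lemma pdq_V_c (i : Fin n) :
    pdq (fun w => Vfun n A z w) i.castSucc pt = pt.2 i.castSucc / (z + A i) := by
  unfold pdq
  have hfun : (fun t => Vfun n A z (Function.update pt.1 i.castSucc t, pt.2))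
      = fun t => 2 * pt.2 (Fin.last n) +
          ∑ j : Fin n, pt.2 j.castSucc * (if j = i then t else pt.1 j.castSucc) / (z + A j) := by
    funext t; simp [Vfun, Function.update_apply, Fin.castSucc_inj]
  rw [hfun]
  have h : ∀ j ∈ (Finset.univ : Finset (Fin n)), HasDerivAt
      (fun t : ℝ => pt.2 j.castSucc * (if j = i then t else pt.1 j.castSucc) / (z + A j))
      (if j = i then pt.2 i.castSucc / (z + A i) else 0) (pt.1 i.castSucc) := by
    intro j _
    rcases eq_or_ne j i with h | h
    · subst h; simp only [if_pos rfl]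
      simpa using ((hasDerivAt_id (pt.1 j.castSucc)).const_mul (pt.2 j.castSucc)).div_const
        (z + A j)
    · simp only [if_neg h]; exact hasDerivAt_const _ _
  have H := HasDerivAt.const_add (2 * pt.2 (Fin.last n)) (HasDerivAt.fun_sum h)
  rw [H.deriv, Finset.sum_ite_eq' Finset.univ i]
  simp

lemma pdq_V_l :
    pdq (fun w => Vfun n A z w) (Fin.last n) pt = 0 := by
  unfold pdq
  have hfun : (fun t => Vfun n A z (Function.update pt.1 (Fin.last n) t, pt.2))
      = fun _ : ℝ => Vfun n A z pt := by
    funext t; simp [Vfun, Function.update_apply]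
  rw [hfun]; exact deriv_const _ _

lemma pdp_V_c (i : Fin n) :
    pdp (fun w => Vfun n A z w) i.castSucc pt = pt.1 i.castSucc / (z + A i) := by
  unfold pdp
  have hfun : (fun t => Vfun n A z (pt.1, Function.update pt.2 i.castSucc t))
      = fun t => 2 * pt.2 (Fin.last n) +
          ∑ j : Fin n, (if j = i then t else pt.2 j.castSucc) * pt.1 j.castSucc / (z + A j) := by
    funext t; simp [Vfun, Function.update_apply, Fin.castSucc_inj]
  rw [hfun]
  have h : ∀ j ∈ (Finset.univ : Finset (Fin n)), HasDerivAt
      (fun t : ℝ => (if j = i then t else pt.2 j.castSucc) * pt.1 j.castSucc / (z + A j))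
      (if j = i then pt.1 i.castSucc / (z + A i) else 0) (pt.2 i.castSucc) := by
    intro j _
    rcases eq_or_ne j i with h | h
    · subst h; simp only [if_pos rfl]
      simpa using ((hasDerivAt_id (pt.2 j.castSucc)).mul_const (pt.1 j.castSucc)).div_const
        (z + A j)
    · simp only [if_neg h]; exact hasDerivAt_const _ _
  have H := HasDerivAt.const_add (2 * pt.2 (Fin.last n)) (HasDerivAt.fun_sum h)
  rw [H.deriv, Finset.sum_ite_eq' Finset.univ i]
  simp

lemma pdp_V_l :
    pdp (fun w => Vfun n A z w) (Fin.last n) pt = 2 := by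
  unfold pdp
  have hfun : (fun t => Vfun n A z (pt.1, Function.update pt.2 (Fin.last n) t))
      = fun t => 2 * t +
          ∑ j : Fin n, pt.2 j.castSucc * pt.1 j.castSucc / (z + A j) := by
    funext t; simp [Vfun, Function.update_apply]
  rw [hfun]
  have H := ((hasDerivAt_id' (pt.2 (Fin.last n))).const_mul 2).add_const
    (∑ j : Fin n, pt.2 j.castSucc * pt.1 j.castSucc / (z + A j))
  rw [H.deriv]; norm_num

lemma pdp_W_c (i : Fin n) :
    pdp (fun w => Wfun n N A 𝒰 z w) i.castSucc pt = 2 * pt.2 i.castSucc / (z + A i) := by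
  unfold pdp
  have hfun : (fun t => Wfun n N A 𝒰 z (pt.1, Function.update pt.2 i.castSucc t))
      = fun t => (4 * z ^ (N-1) - 2 * ∑ k ∈ Finset.range (N-1), 𝒰 (N-k-1) pt.1 * z ^ k) +
          ∑ j : Fin n, (if j = i then t else pt.2 j.castSucc)^2 / (z + A j) := by
    funext t; simp [Wfun, Function.update_apply, Fin.castSucc_inj]
  rw [hfun]
  have h : ∀ j ∈ (Finset.univ : Finset (Fin n)), HasDerivAt
      (fun t : ℝ => (if j = i then t else pt.2 j.castSucc)^2 / (z + A j))
      (if j = i then 2 * pt.2 i.castSucc / (z + A i) else 0) (pt.2 i.castSucc) := by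
    intro j _
    rcases eq_or_ne j i with h | h
    · subst h; simp only [if_pos rfl]
      simpa using (hasDerivAt_pow 2 (pt.2 j.castSucc)).div_const (z + A j)
    · simp only [if_neg h]; exact hasDerivAt_const _ _
  have H := HasDerivAt.const_add
    (4 * z ^ (N-1) - 2 * ∑ k ∈ Finset.range (N-1), 𝒰 (N-k-1) pt.1 * z ^ k)
    (HasDerivAt.fun_sum h)
  rw [H.deriv, Finset.sum_ite_eq' Finset.univ i]
  simp

lemma pdp_W_l :
    pdp (fun w => Wfun n N A 𝒰 z w) (Fin.last n) pt = 0 := by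
  unfold pdp
  have hfun : (fun t => Wfun n N A 𝒰 z (pt.1, Function.update pt.2 (Fin.last n) t))
      = fun _ : ℝ => Wfun n N A 𝒰 z pt := by
    funext t; simp [Wfun, Function.update_apply]
  rw [hfun]; exact deriv_const _ _

lemma pdq_W (h𝒰 : ∀ m ≤ N-1, ContDiff ℝ (⊤ : ℕ∞) (𝒰 m)) (j : Fin (n+1)) :
    pdq (fun w => Wfun n N A 𝒰 z w) j pt
      = -(2 * ∑ k ∈ Finset.range (N-1), pdq' (𝒰 (N-k-1)) j pt.1 * z ^ k) := by
  unfold pdq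
  have h1 : ∀ k ∈ Finset.range (N-1), HasDerivAt
      (fun t => 𝒰 (N-k-1) (Function.update pt.1 j t) * z ^ k)
      (pdq' (𝒰 (N-k-1)) j pt.1 * z ^ k) (pt.1 j) := fun k hk =>
    (hasDerivAt_comp_update _ (h𝒰 _ (by simp only [Finset.mem_range] at hk; omega)) pt.1 j).mul_const _
  have H := (((HasDerivAt.fun_sum h1).const_mul 2).const_sub (4 * z ^ (N-1))).add_const
      (∑ i : Fin n, (pt.2 i.castSucc) ^ 2 / (z + A i))
  exact H.deriv

end AuxVals
section AuxTele

lemma sum_shift (f : ℕ → ℝ) (z : ℝ) (M : ℕ) :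
    ∑ k ∈ Finset.range (M+1), f (M+1-k) * z ^ k
      = f (M+1) + z * ∑ k ∈ Finset.range M, f (M-k) * z ^ k := by
  rw [Finset.sum_range_succ', Finset.mul_sum]
  simp only [Nat.succ_sub_succ, Nat.sub_zero, pow_zero, mul_one]
  rw [add_comm]
  congr 1
  apply Finset.sum_congr rfl
  intro k _
  ring

lemma tele1 (M : ℕ) (hM : 1 ≤ M) (a l : ℕ → ℝ) (z Ai qi : ℝ)
    (ha1 : a 1 = 0)
    (hr : ∀ m, 2 ≤ m → m ≤ M → a m = (1/2) * qi * l (m-1) - Ai * a (m-1)) :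
    (z + Ai) * (-(2 * ∑ k ∈ Finset.range M, a (M-k) * z ^ k))
      = 2 * qi * (-(1/2) * ∑ k ∈ Finset.range M, l (M-k) * z ^ k)
        + (qi * l M - 2 * Ai * a M) := by
  induction M with
  | zero => omega
  | succ M ih =>
    rcases Nat.eq_or_lt_of_le hM with h1 | h1
    · -- M + 1 = 1, i.e. M = 0
      have hM0 : M = 0 := by omega
      subst hM0
      simp [ha1]
      ring
    · have hM1 : 1 ≤ M := by omega
      have IH := ih hM1 (fun m h2 hm => hr m h2 (by omega))
      rw [sum_shift, sum_shift]
      have hrec := hr (M+1) (by omega) le_rfl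
      simp only [Nat.add_sub_cancel] at hrec
      linear_combination z * IH + (-2*z) * hrec

lemma tele2 (M : ℕ) (hM : 1 ≤ M) (u l s : ℕ → ℝ) (z qB : ℝ)
    (hl1 : l 1 = -2)
    (hr : ∀ m, 2 ≤ m → m ≤ M → l m = u (m-1) + (1/2) * s (m-1) + qB * l (m-1)) :
    -4*z * (∑ k ∈ Finset.range M, l (M-k) * z ^ k)
      + 4*qB * (∑ k ∈ Finset.range M, l (M-k) * z ^ k)
      - 8 * z ^ M
      + 4 * (∑ k ∈ Finset.range M, u (M-k) * z ^ k)
      + 2 * (∑ k ∈ Finset.range M, s (M-k) * z ^ k)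
      = 4 * qB * l M + 4 * u M + 2 * s M := by
  induction M with
  | zero => omega
  | succ M ih =>
    rcases Nat.eq_or_lt_of_le hM with h1 | h1
    · have hM0 : M = 0 := by omega
      subst hM0
      simp [hl1]
      ring
    · have hM1 : 1 ≤ M := by omega
      have IH := ih hM1 (fun m h2 hm => hr m h2 (by omega))
      rw [sum_shift, sum_shift, sum_shift]
      have hrec := hr (M+1) (by omega) le_rfl
      simp only [Nat.add_sub_cancel] at hrec
      have hzM : z ^ (M+1) = z * z ^ M := by ring
      rw [hzM]
      linear_combination z * IH + (-4*z) * hrec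

end AuxTele

section AuxPoisson

lemma pdq_neg {m : ℕ} (f : Phase m → ℝ) (i : Fin m) (x : Phase m) :
    pdq (fun w => -f w) i x = -pdq f i x := by
  unfold pdq
  exact deriv.neg

lemma pdp_neg {m : ℕ} (f : Phase m → ℝ) (i : Fin m) (x : Phase m) :
    pdp (fun w => -f w) i x = -pdp f i x := by
  unfold pdp
  exact deriv.neg

lemma poisson_neg_left {m : ℕ} (f g : Phase m → ℝ) (x : Phase m) :
    poisson (fun w => -f w) g x = -poisson f g x := by
  unfold poisson
  rw [← Finset.sum_neg_distrib]
  apply Finset.sum_congr rfl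
  intro i _
  rw [pdq_neg, pdp_neg]
  ring

lemma poisson_neg_right {m : ℕ} (f g : Phase m → ℝ) (x : Phase m) :
    poisson f (fun w => -g w) x = -poisson f g x := by
  unfold poisson
  rw [← Finset.sum_neg_distrib]
  apply Finset.sum_congr rfl
  intro i _
  rw [pdq_neg, pdp_neg]
  ring

lemma poisson_antisymm {m : ℕ} (f g : Phase m → ℝ) (x : Phase m) :
    poisson g f x = -poisson f g x := by
  unfold poisson
  rw [← Finset.sum_neg_distrib]
  apply Finset.sum_congr rfl
  intro i _
  ring

end AuxPoisson
section AuxKey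

variable {n N : ℕ} {A : Fin n → ℝ} {B : ℝ} {𝒰 : ℕ → (Fin (n+1) → ℝ) → ℝ}

lemma F1_l (h1 : ∀ q : Fin (n+1) → ℝ, 𝒰 1 q = -2 * q (Fin.last n) - 2 * B)
    (q : Fin (n+1) → ℝ) :
    pdq' (𝒰 1) (Fin.last n) q = -2 := by
  unfold pdq'
  have hfun : (fun t => 𝒰 1 (Function.update q (Fin.last n) t))
      = fun t => -2 * t - 2 * B := by
    funext t; rw [h1]; simp [Function.update_apply]
  rw [hfun]
  have H := ((hasDerivAt_id' (q (Fin.last n))).const_mul (-2)).sub_const (2*B)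
  rw [H.deriv]; norm_num

lemma F1_c (h1 : ∀ q : Fin (n+1) → ℝ, 𝒰 1 q = -2 * q (Fin.last n) - 2 * B)
    (q : Fin (n+1) → ℝ) (i : Fin n) :
    pdq' (𝒰 1) i.castSucc q = 0 := by
  unfold pdq'
  have hfun : (fun t => 𝒰 1 (Function.update q i.castSucc t))
      = fun _ : ℝ => -2 * q (Fin.last n) - 2*B := by
    funext t; rw [h1]; simp [Function.update_apply]
  rw [hfun]; exact deriv_const _ _

lemma sub_conv {N : ℕ} (g : ℕ → ℝ) (z : ℝ) :
    ∑ k ∈ Finset.range (N-1), g (N-k-1) * z ^ k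
      = ∑ k ∈ Finset.range (N-1), g (N-1-k) * z ^ k := by
  apply Finset.sum_congr rfl
  intro k _
  rw [Nat.sub_right_comm]

lemma Qalt (hrec : Recur n (N-1) A B 𝒰) (hN : 3 ≤ N) (pt : Phase (n+1)) (z : ℝ) :
    Qfun n N 𝒰 z pt
      = -(1/2) * ∑ k ∈ Finset.range (N-1), pdq' (𝒰 (N-k-1)) (Fin.last n) pt.1 * z ^ k := by
  unfold Qfun
  rw [show N - 1 = (N-2)+1 by omega, Finset.sum_range_succ,
    show N - (N-2) - 1 = 1 by omega, F1_l hrec.2.2.1]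
  ring

lemma keyA (hrec : Recur n (N-1) A B 𝒰) (hN : 3 ≤ N) (q : Fin (n+1) → ℝ) (i : Fin n) (z : ℝ) :
    (z + A i) * (-(2 * ∑ k ∈ Finset.range (N-1), pdq' (𝒰 (N-k-1)) i.castSucc q * z ^ k))
      = 2 * q i.castSucc *
          (-(1/2) * ∑ k ∈ Finset.range (N-1), pdq' (𝒰 (N-k-1)) (Fin.last n) q * z ^ k)
        + (q i.castSucc * pdq' (𝒰 (N-1)) (Fin.last n) q
            - 2 * A i * pdq' (𝒰 (N-1)) i.castSucc q) := by
  rw [sub_conv (fun m => pdq' (𝒰 m) i.castSucc q) z,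
    sub_conv (fun m => pdq' (𝒰 m) (Fin.last n) q) z]
  exact tele1 (N-1) (by omega) (fun m => pdq' (𝒰 m) i.castSucc q)
    (fun m => pdq' (𝒰 m) (Fin.last n) q) z (A i) (q i.castSucc)
    (F1_c hrec.2.2.1 q i)
    (fun m h2 hm => (hrec.2.2.2.2 m h2 hm q).1 i)

lemma key2 (hrec : Recur n (N-1) A B 𝒰) (hN : 3 ≤ N) (q : Fin (n+1) → ℝ) (z : ℝ) :
    -4*z * (∑ k ∈ Finset.range (N-1), pdq' (𝒰 (N-k-1)) (Fin.last n) q * z ^ k)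
      + 4*(q (Fin.last n) - B) *
          (∑ k ∈ Finset.range (N-1), pdq' (𝒰 (N-k-1)) (Fin.last n) q * z ^ k)
      - 8 * z ^ (N-1)
      + 4 * (∑ k ∈ Finset.range (N-1), 𝒰 (N-k-1) q * z ^ k)
      + 2 * (∑ k ∈ Finset.range (N-1),
          (∑ i : Fin n, q i.castSucc * pdq' (𝒰 (N-k-1)) i.castSucc q) * z ^ k)
      = 4 * (q (Fin.last n) - B) * pdq' (𝒰 (N-1)) (Fin.last n) q
        + 4 * 𝒰 (N-1) q
        + 2 * ∑ i : Fin n, q i.castSucc * pdq' (𝒰 (N-1)) i.castSucc q := by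
  rw [sub_conv (fun m => pdq' (𝒰 m) (Fin.last n) q) z,
    sub_conv (fun m => 𝒰 m q) z,
    sub_conv (fun m => ∑ i : Fin n, q i.castSucc * pdq' (𝒰 m) i.castSucc q) z]
  exact tele2 (N-1) (by omega) (fun m => 𝒰 m q)
    (fun m => pdq' (𝒰 m) (Fin.last n) q)
    (fun m => ∑ i : Fin n, q i.castSucc * pdq' (𝒰 m) i.castSucc q)
    z (q (Fin.last n) - B)
    (F1_l hrec.2.2.1 q)
    (fun m h2 hm => (hrec.2.2.2.2 m h2 hm q).2)

end AuxKey
section AuxBridge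

variable {n N : ℕ} {A : Fin n → ℝ} {B : ℝ} {𝒰 : ℕ → (Fin (n+1) → ℝ) → ℝ}

lemma pdq_W_c_div (hrec : Recur n (N-1) A B 𝒰) (hN : 3 ≤ N) {z : ℝ} (pt : Phase (n+1))
    (i : Fin n) (hz : z + A i ≠ 0) :
    pdq (fun w => Wfun n N A 𝒰 z w) i.castSucc pt
      = (2 * pt.1 i.castSucc * Qfun n N 𝒰 z pt
          + (pt.1 i.castSucc * pdq' (𝒰 (N-1)) (Fin.last n) pt.1
             - 2 * A i * pdq' (𝒰 (N-1)) i.castSucc pt.1)) / (z + A i) := by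
  rw [pdq_W hrec.1, eq_div_iff hz, Qalt hrec hN]
  linear_combination keyA hrec hN pt.1 i z

lemma pdq_W_l_Q (hrec : Recur n (N-1) A B 𝒰) (hN : 3 ≤ N) {z : ℝ} (pt : Phase (n+1)) :
    pdq (fun w => Wfun n N A 𝒰 z w) (Fin.last n) pt = 4 * Qfun n N 𝒰 z pt := by
  rw [pdq_W hrec.1, Qalt hrec hN]
  ring

lemma key2' (hrec : Recur n (N-1) A B 𝒰) (hN : 3 ≤ N) (pt : Phase (n+1)) (z : ℝ) :
    ∑ i : Fin n, pt.1 i.castSucc * pdq (fun w => Wfun n N A 𝒰 z w) i.castSucc pt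
      = 8*z*Qfun n N 𝒰 z pt - 8*(pt.1 (Fin.last n) - B)*Qfun n N 𝒰 z pt - 8*z^(N-1)
        + 4*(∑ k ∈ Finset.range (N-1), 𝒰 (N-k-1) pt.1 * z^k)
        - (4 * (pt.1 (Fin.last n) - B) * pdq' (𝒰 (N-1)) (Fin.last n) pt.1
            + 4 * 𝒰 (N-1) pt.1
            + 2 * ∑ i : Fin n, pt.1 i.castSucc * pdq' (𝒰 (N-1)) i.castSucc pt.1) := by
  have hstep1 : ∀ i : Fin n,
      pt.1 i.castSucc * pdq (fun w => Wfun n N A 𝒰 z w) i.castSucc pt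
        = ∑ k ∈ Finset.range (N-1),
            (-2) * (pt.1 i.castSucc * pdq' (𝒰 (N-k-1)) i.castSucc pt.1) * z ^ k := by
    intro i
    have e : -(2 * ∑ k ∈ Finset.range (N-1), pdq' (𝒰 (N-k-1)) i.castSucc pt.1 * z ^ k)
        = ∑ k ∈ Finset.range (N-1), (-2 * pdq' (𝒰 (N-k-1)) i.castSucc pt.1) * z ^ k := by
      rw [Finset.mul_sum, ← Finset.sum_neg_distrib]
      apply Finset.sum_congr rfl
      intro k _
      ring
    rw [pdq_W hrec.1, e, Finset.mul_sum]
    apply Finset.sum_congr rfl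
    intro k _
    ring
  rw [Finset.sum_congr rfl (fun i _ => hstep1 i), Finset.sum_comm]
  have hstep2 : ∀ k ∈ Finset.range (N-1),
      (∑ i : Fin n, (-2) * (pt.1 i.castSucc * pdq' (𝒰 (N-k-1)) i.castSucc pt.1) * z ^ k)
        = (-2) * ((∑ i : Fin n, pt.1 i.castSucc * pdq' (𝒰 (N-k-1)) i.castSucc pt.1) * z ^ k) := by
    intro k _
    rw [← Finset.sum_mul, ← Finset.mul_sum, mul_assoc]
  rw [Finset.sum_congr rfl hstep2, ← Finset.mul_sum, Qalt hrec hN]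
  linear_combination (-1 : ℝ) * key2 hrec hN pt.1 z

end AuxBridge
section AuxBrackets

variable {n N : ℕ} {A : Fin n → ℝ} {B : ℝ} {𝒰 : ℕ → (Fin (n+1) → ℝ) → ℝ}

lemma alpha_symm {x y : ℝ} (pt : Phase (n+1)) :
    alphaFun n N 𝒰 y x pt = alphaFun n N 𝒰 x y pt := by
  unfold alphaFun
  rw [show Qfun n N 𝒰 y pt - Qfun n N 𝒰 x pt = -(Qfun n N 𝒰 x pt - Qfun n N 𝒰 y pt) by ring,
    show y - x = -(x - y) by ring, neg_div_neg_eq]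

lemma br_UU {x y : ℝ} (pt : Phase (n+1)) :
    poisson (fun w => Ufun n A B x w) (fun w => Ufun n A B y w) pt = 0 := by
  unfold poisson
  apply Finset.sum_eq_zero
  intro j _
  rw [pdp_U, pdp_U]
  ring

lemma br_VV {x y : ℝ} (pt : Phase (n+1)) :
    poisson (fun w => Vfun n A x w) (fun w => Vfun n A y w) pt = 0 := by
  unfold poisson
  rw [Fin.sum_univ_castSucc]
  have h1 : ∀ i : Fin n,
      (pdp (fun w => Vfun n A x w) i.castSucc pt * pdq (fun w => Vfun n A y w) i.castSucc pt
        - pdq (fun w => Vfun n A x w) i.castSucc pt * pdp (fun w => Vfun n A y w) i.castSucc pt)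
      = 0 := by
    intro i
    rw [pdp_V_c, pdp_V_c, pdq_V_c, pdq_V_c]
    ring
  rw [Finset.sum_congr rfl (fun i _ => h1 i), Finset.sum_const_zero, pdq_V_l, pdq_V_l]
  ring

lemma br_UV {x y : ℝ} (hxy : x ≠ y) (hx : ∀ i, x + A i ≠ 0) (hy : ∀ i, y + A i ≠ 0)
    (pt : Phase (n+1)) :
    poisson (fun w => Ufun n A B x w) (fun w => Vfun n A y w) pt
      = 2/(x-y) * (Ufun n A B x pt - Ufun n A B y pt) := by
  have hxy' : x - y ≠ 0 := sub_ne_zero.mpr hxy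
  unfold poisson
  rw [Fin.sum_univ_castSucc]
  have h1 : ∀ i : Fin n,
      (pdp (fun w => Ufun n A B x w) i.castSucc pt * pdq (fun w => Vfun n A y w) i.castSucc pt
        - pdq (fun w => Ufun n A B x w) i.castSucc pt * pdp (fun w => Vfun n A y w) i.castSucc pt)
      = 2/(x-y) * (pt.1 i.castSucc ^ 2 / (y + A i) - pt.1 i.castSucc ^ 2 / (x + A i)) := by
    intro i
    rw [pdp_U, pdq_U_c, pdp_V_c]
    have h1 := hx i
    have h2 := hy i
    field_simp
    ring
  rw [Finset.sum_congr rfl (fun i _ => h1 i), ← Finset.mul_sum, Finset.sum_sub_distrib,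
    pdp_U, pdq_U_l, pdp_V_l]
  unfold Ufun
  field_simp
  ring

lemma br_VU {x y : ℝ} (hxy : x ≠ y) (hx : ∀ i, x + A i ≠ 0) (hy : ∀ i, y + A i ≠ 0)
    (pt : Phase (n+1)) :
    poisson (fun w => Vfun n A x w) (fun w => Ufun n A B y w) pt
      = 2/(x-y) * (Ufun n A B y pt - Ufun n A B x pt) := by
  rw [poisson_antisymm, br_UV hxy.symm hy hx pt,
    show y - x = -(x-y) by ring, div_neg]
  ring

lemma br_UW (hrec : Recur n (N-1) A B 𝒰) (hN : 3 ≤ N) {x y : ℝ} (hxy : x ≠ y)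
    (hx : ∀ i, x + A i ≠ 0) (hy : ∀ i, y + A i ≠ 0) (pt : Phase (n+1)) :
    poisson (fun w => Ufun n A B x w) (fun w => Wfun n N A 𝒰 y w) pt
      = 2/(x-y) * (2 * (Vfun n A y pt - Vfun n A x pt)) := by
  have hxy' : x - y ≠ 0 := sub_ne_zero.mpr hxy
  unfold poisson
  rw [Fin.sum_univ_castSucc]
  have h1 : ∀ i : Fin n,
      (pdp (fun w => Ufun n A B x w) i.castSucc pt * pdq (fun w => Wfun n N A 𝒰 y w) i.castSucc pt
        - pdq (fun w => Ufun n A B x w) i.castSucc pt * pdp (fun w => Wfun n N A 𝒰 y w) i.castSucc pt)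
      = 2/(x-y) * (2 * (pt.2 i.castSucc * pt.1 i.castSucc / (y + A i)
          - pt.2 i.castSucc * pt.1 i.castSucc / (x + A i))) := by
    intro i
    rw [pdp_U, pdq_U_c, pdp_W_c]
    have h1 := hx i
    have h2 := hy i
    field_simp
    ring
  rw [Finset.sum_congr rfl (fun i _ => h1 i), ← Finset.mul_sum, ← Finset.mul_sum,
    Finset.sum_sub_distrib, pdp_U, pdq_U_l, pdp_W_l]
  unfold Vfun
  ring

lemma br_WU (hrec : Recur n (N-1) A B 𝒰) (hN : 3 ≤ N) {x y : ℝ} (hxy : x ≠ y)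
    (hx : ∀ i, x + A i ≠ 0) (hy : ∀ i, y + A i ≠ 0) (pt : Phase (n+1)) :
    poisson (fun w => Wfun n N A 𝒰 x w) (fun w => Ufun n A B y w) pt
      = 2/(x-y) * (2 * (Vfun n A x pt - Vfun n A y pt)) := by
  rw [poisson_antisymm, br_UW hrec hN hxy.symm hy hx pt,
    show y - x = -(x-y) by ring, div_neg]
  ring

lemma br_WW (hrec : Recur n (N-1) A B 𝒰) (hN : 3 ≤ N) {x y : ℝ} (hxy : x ≠ y)
    (hx : ∀ i, x + A i ≠ 0) (hy : ∀ i, y + A i ≠ 0) (pt : Phase (n+1)) :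
    poisson (fun w => Wfun n N A 𝒰 x w) (fun w => Wfun n N A 𝒰 y w) pt
      = 4 * alphaFun n N 𝒰 x y pt * (Vfun n A x pt - Vfun n A y pt) := by
  have hxy' : x - y ≠ 0 := sub_ne_zero.mpr hxy
  unfold poisson
  rw [Fin.sum_univ_castSucc]
  have h1 : ∀ i : Fin n,
      (pdp (fun w => Wfun n N A 𝒰 x w) i.castSucc pt * pdq (fun w => Wfun n N A 𝒰 y w) i.castSucc pt
        - pdq (fun w => Wfun n N A 𝒰 x w) i.castSucc pt * pdp (fun w => Wfun n N A 𝒰 y w) i.castSucc pt)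
      = 4 * (Qfun n N 𝒰 y pt - Qfun n N 𝒰 x pt) *
          (pt.2 i.castSucc * pt.1 i.castSucc / ((x + A i) * (y + A i))) := by
    intro i
    rw [pdp_W_c, pdp_W_c, pdq_W_c_div hrec hN pt i (hx i), pdq_W_c_div hrec hN pt i (hy i)]
    have h1 := hx i
    have h2 := hy i
    field_simp
    ring
  rw [Finset.sum_congr rfl (fun i _ => h1 i), ← Finset.mul_sum, pdp_W_l, pdp_W_l]
  have hV : Vfun n A x pt - Vfun n A y pt
      = (y - x) * ∑ i : Fin n, pt.2 i.castSucc * pt.1 i.castSucc / ((x + A i) * (y + A i)) := by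
    unfold Vfun
    rw [add_sub_add_left_eq_sub, Finset.mul_sum, ← Finset.sum_sub_distrib]
    apply Finset.sum_congr rfl
    intro i _
    have h1 := hx i
    have h2 := hy i
    field_simp
    ring
  rw [hV]
  unfold alphaFun
  field_simp
  ring

lemma br_VW (hrec : Recur n (N-1) A B 𝒰) (hN : 3 ≤ N) {x y : ℝ} (hxy : x ≠ y)
    (hx : ∀ i, x + A i ≠ 0) (hy : ∀ i, y + A i ≠ 0) (pt : Phase (n+1)) :
    poisson (fun w => Vfun n A x w) (fun w => Wfun n N A 𝒰 y w) pt
      = 2/(x-y) * (Wfun n N A 𝒰 x pt - Wfun n N A 𝒰 y pt)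
        - 2 * alphaFun n N 𝒰 x y pt * Ufun n A B x pt := by
  have hxy' : x - y ≠ 0 := sub_ne_zero.mpr hxy
  apply mul_left_cancel₀ hxy'
  have hR : (x-y) * (2/(x-y) * (Wfun n N A 𝒰 x pt - Wfun n N A 𝒰 y pt)
        - 2 * alphaFun n N 𝒰 x y pt * Ufun n A B x pt)
      = 2 * (Wfun n N A 𝒰 x pt - Wfun n N A 𝒰 y pt)
        - 2 * (Qfun n N 𝒰 x pt - Qfun n N 𝒰 y pt) * Ufun n A B x pt := by
    unfold alphaFun
    field_simp
  rw [hR]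
  unfold poisson
  rw [Fin.sum_univ_castSucc, pdp_V_l, pdq_V_l, pdq_W_l_Q hrec hN, pdp_W_l]
  have h2 : ∀ i : Fin n, (x - y) *
      (pdp (fun w => Vfun n A x w) i.castSucc pt * pdq (fun w => Wfun n N A 𝒰 y w) i.castSucc pt
        - pdq (fun w => Vfun n A x w) i.castSucc pt * pdp (fun w => Wfun n N A 𝒰 y w) i.castSucc pt)
      = pt.1 i.castSucc * pdq (fun w => Wfun n N A 𝒰 y w) i.castSucc pt
        - pt.1 i.castSucc * pdq (fun w => Wfun n N A 𝒰 x w) i.castSucc pt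
        - 2 * (Qfun n N 𝒰 y pt - Qfun n N 𝒰 x pt) * (pt.1 i.castSucc ^ 2 / (x + A i))
        - 2 * (pt.2 i.castSucc ^ 2 / (y + A i))
        + 2 * (pt.2 i.castSucc ^ 2 / (x + A i)) := by
    intro i
    rw [pdp_V_c, pdq_V_c, pdp_W_c, pdq_W_c_div hrec hN pt i (hx i),
      pdq_W_c_div hrec hN pt i (hy i)]
    have h1 := hx i
    have h2 := hy i
    field_simp
    ring
  rw [mul_add, Finset.mul_sum, Finset.sum_congr rfl (fun i _ => h2 i)]
  simp only [Finset.sum_add_distrib, Finset.sum_sub_distrib]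
  rw [← Finset.mul_sum, ← Finset.mul_sum, ← Finset.mul_sum,
    key2' hrec hN pt x, key2' hrec hN pt y]
  unfold Wfun Ufun
  ring

lemma br_WV (hrec : Recur n (N-1) A B 𝒰) (hN : 3 ≤ N) {x y : ℝ} (hxy : x ≠ y)
    (hx : ∀ i, x + A i ≠ 0) (hy : ∀ i, y + A i ≠ 0) (pt : Phase (n+1)) :
    poisson (fun w => Wfun n N A 𝒰 x w) (fun w => Vfun n A y w) pt
      = -(2/(x-y)) * (Wfun n N A 𝒰 x pt - Wfun n N A 𝒰 y pt)
        + 2 * alphaFun n N 𝒰 x y pt * Ufun n A B y pt := by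
  rw [poisson_antisymm, br_VW hrec hN hxy.symm hy hx pt, alpha_symm,
    show y - x = -(x-y) by ring, div_neg]
  ring

end AuxBrackets
set_option maxHeartbeats 1000000 in
/-- the linear r-matrix algebra with dynamical r-matrix
{L₁(x) ⊗, L₂(y)} = [r(x−y), L₁(x)+L₂(y)] + [s_N(x,y), L₁(x)−L₂(y)]. -/
theorem linear_r_matrix_algebra
    (n : ℕ) (hn : 1 ≤ n) (A : Fin n → ℝ) (hA : Function.Injective A) (B : ℝ)
    (N : ℕ) (hN : 3 ≤ N) (𝒰 : ℕ → (Fin (n+1) → ℝ) → ℝ)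
    (hrec : Recur n (N-1) A B 𝒰) :
    ∀ x y : ℝ, x ≠ y → (∀ i : Fin n, x ≠ -A i) → (∀ i : Fin n, y ≠ -A i) →
    ∀ pt : Phase (n+1), ∀ i k j l : Fin 2,
      poisson (fun w => Lmat n N A B 𝒰 x w i j) (fun w => Lmat n N A B 𝒰 y w k l) pt
        = (mcomm ((2 / (x - y)) • Pmat)
              (Lmat n N A B 𝒰 x pt ⊗ₖ (1 : Matrix (Fin 2) (Fin 2) ℝ)
                + (1 : Matrix (Fin 2) (Fin 2) ℝ) ⊗ₖ Lmat n N A B 𝒰 y pt)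
            + mcomm ((2 * alphaFun n N 𝒰 x y pt) • (sigmaM ⊗ₖ sigmaM))
              (Lmat n N A B 𝒰 x pt ⊗ₖ (1 : Matrix (Fin 2) (Fin 2) ℝ)
                - (1 : Matrix (Fin 2) (Fin 2) ℝ) ⊗ₖ Lmat n N A B 𝒰 y pt))
            (i, k) (j, l) := by
  intro x y hxy hx hy pt i k j l
  have hx' : ∀ i : Fin n, x + A i ≠ 0 := fun i h => hx i (eq_neg_of_add_eq_zero_left h)
  have hy' : ∀ i : Fin n, y + A i ≠ 0 := fun i h => hy i (eq_neg_of_add_eq_zero_left h)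
  fin_cases i <;> fin_cases k <;> fin_cases j <;> fin_cases l <;>
    simp only [Fin.zero_eta, Fin.mk_one, Lmat, mcomm, Matrix.add_apply, Matrix.sub_apply, Matrix.mul_apply,
      Matrix.smul_apply, Fintype.sum_prod_type, Fin.sum_univ_two, Matrix.kroneckerMap_apply,
      Matrix.one_apply, Pmat, sigmaM, Matrix.of_apply, Matrix.cons_val', Matrix.cons_val_zero,
      Matrix.cons_val_one, Matrix.head_cons, Matrix.head_fin_const, Matrix.empty_val',
      Matrix.cons_val_fin_one, smul_eq_mul, Prod.mk.injEq] <;>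
    (try simp only [poisson_neg_left, poisson_neg_right]) <;>
    simp only [br_UU (A := A) (B := B) (x := x) (y := y) pt,
      br_VV (A := A) (x := x) (y := y) pt,
      br_UV hxy hx' hy' pt, br_VU hxy hx' hy' pt,
      br_UW hrec hN hxy hx' hy' pt, br_WU hrec hN hxy hx' hy' pt,
      br_VW hrec hN hxy hx' hy' pt, br_WV hrec hN hxy hx' hy' pt,
      br_WW hrec hN hxy hx' hy' pt] <;>
    norm_num <;>
    try ring
end
end
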